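/- One-dimensional Carleman estimate: let a < b be real numbers and let v : [a,b] → ℝ be continuously differentiable with v(b) = 0. Then for every λ > 0, ∫_a^b (v'(y))² e^{2λy} dy ≥ λ² ∫_a^b (v(y))² e^{2λy} dy. -/

import Mathlib

theorem stmt6 (a b l : ℝ) (hab : a < b) (hl : 0 < l) (v v' : ℝ → ℝ)
    (hv : ∀ y ∈ Set.Icc a b, HasDerivAt v (v' y) y)
    (hv' : ContinuousOn v' (Set.Icc a b))
    (hvb : v b = 0) :
    l ^ 2 * ∫ y in a..b, (v y) ^ 2 * Real.exp (2 * l * y)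
      ≤ ∫ y in a..b, (v' y) ^ 2 * Real.exp (2 * l * y) := by
  have hab' : a ≤ b := hab.le
  have huIcc : Set.uIcc a b = Set.Icc a b := Set.uIcc_of_le hab'
  have hvc : ContinuousOn v (Set.Icc a b) := fun y hy =>
    (hv y hy).continuousAt.continuousWithinAt
  have hexpc : Continuous fun y : ℝ => Real.exp (2 * l * y) := by continuity
  set W' : ℝ → ℝ := fun y => (2 * v y * v' y + 2 * l * (v y) ^ 2) * Real.exp (2 * l * y)
    with hW'def
  have hW : ∀ y ∈ Set.Icc a b,
      HasDerivAt (fun y => (v y) ^ 2 * Real.exp (2 * l * y)) (W' y) y := by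
    intro y hy
    have h1 : HasDerivAt (fun y => (v y) ^ 2) (2 * v y * v' y) y := by
      have := (hv y hy).fun_pow 2
      simpa [mul_comm, mul_assoc, mul_left_comm] using this
    have h2 : HasDerivAt (fun y => Real.exp (2 * l * y)) (2 * l * Real.exp (2 * l * y)) y := by
      have h3 : HasDerivAt (fun y : ℝ => 2 * l * y) (2 * l) y := by
        simpa using (hasDerivAt_id y).const_mul (2 * l)
      simpa [mul_comm] using h3.exp
    have : HasDerivAt (fun y => (v y) ^ 2 * Real.exp (2 * l * y)) _ y := h1.fun_mul h2
    convert this using 1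
    simp [hW'def]; ring
  have hW'c : ContinuousOn W' (Set.Icc a b) := by
    apply ContinuousOn.mul _ hexpc.continuousOn
    exact (((continuousOn_const.mul hvc).mul hv')).add (continuousOn_const.mul (hvc.pow 2))
  have hiv : IntervalIntegrable (fun y => (v y) ^ 2 * Real.exp (2 * l * y))
      MeasureTheory.volume a b :=
    ((hvc.pow 2).mul hexpc.continuousOn).intervalIntegrable_of_Icc hab'
  have hig : IntervalIntegrable (fun y => (v' y + l * v y) ^ 2 * Real.exp (2 * l * y))
      MeasureTheory.volume a b :=
    (((hv'.add (hvc.const_smul l)).pow 2).mul hexpc.continuousOn).intervalIntegrable_of_Icc hab'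
  have hiW' : IntervalIntegrable W' MeasureTheory.volume a b :=
    hW'c.intervalIntegrable_of_Icc hab'
  have hFTC : ∫ y in a..b, W' y =
      (v b) ^ 2 * Real.exp (2 * l * b) - (v a) ^ 2 * Real.exp (2 * l * a) := by
    apply intervalIntegral.integral_eq_sub_of_hasDerivAt _ hiW'
    intro y hy
    exact hW y (huIcc ▸ hy)
  have key : (∫ y in a..b, (v' y) ^ 2 * Real.exp (2 * l * y))
      = (∫ y in a..b, (v' y + l * v y) ^ 2 * Real.exp (2 * l * y))
        - l * (∫ y in a..b, W' y)
        + l ^ 2 * ∫ y in a..b, (v y) ^ 2 * Real.exp (2 * l * y) := by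
    rw [← intervalIntegral.integral_const_mul, ← intervalIntegral.integral_const_mul,
      ← intervalIntegral.integral_sub hig (hiW'.const_mul l),
      ← intervalIntegral.integral_add ((hig).sub (hiW'.const_mul l)) (hiv.const_mul (l ^ 2))]
    apply intervalIntegral.integral_congr
    intro y hy
    simp only [hW'def]
    ring
  have hg0 : 0 ≤ ∫ y in a..b, (v' y + l * v y) ^ 2 * Real.exp (2 * l * y) := by
    apply intervalIntegral.integral_nonneg hab'
    intro y hy
    positivity
  have hexp0 : 0 ≤ (v a) ^ 2 * Real.exp (2 * l * a) := by positivity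
  rw [key, hFTC, hvb]
  nlinarith [mul_nonneg hl.le hexp0]
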